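/- Let A be an n×N real matrix, let I, J ⊆ {1,…,N} be disjoint index sets, and let L ≥ 0, U ≥ 0 be such that (1−L)‖x‖₂² ≤ ‖Ax‖₂² ≤ (1+U)‖x‖₂² for every x ∈ ℝ^N supported in I ∪ J. Then for every u ∈ ℝ^N supported in I and every v ∈ ℝ^N supported in J, |⟨Au, Av⟩| ≤ (1/2)(L+U)·‖u‖₂·‖v‖₂. -/

import Mathlib

open Finset Matrix

noncomputable def enorm2 {α : Type*} [Fintype α] (v : α → ℝ) : ℝ :=
  Real.sqrt (∑ i, (v i) ^ 2)

def restr {N : ℕ} (I : Finset (Fin N)) (x : Fin N → ℝ) : Fin N → ℝ :=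
  fun i => if i ∈ I then x i else 0

def sparse {N : ℕ} (k : ℕ) (x : Fin N → ℝ) : Prop :=
  (Finset.univ.filter fun i => x i ≠ 0).card ≤ k

def aRIP {n N : ℕ} (A : Matrix (Fin n) (Fin N) ℝ) (m : ℕ) (L U : ℝ) : Prop :=
  ∀ x : Fin N → ℝ, sparse m x →
    (1 - L) * enorm2 x ^ 2 ≤ enorm2 (A.mulVec x) ^ 2 ∧
      enorm2 (A.mulVec x) ^ 2 ≤ (1 + U) * enorm2 x ^ 2

def selects {N : ℕ} (T : Finset (Fin N)) (v : Fin N → ℝ) : Prop :=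
  ∀ i ∈ T, ∀ j ∉ T, |v j| ≤ |v i|

def subCols {n N : ℕ} (A : Matrix (Fin n) (Fin N) ℝ) (I : Finset (Fin N)) :
    Matrix (Fin n) I ℝ :=
  fun r c => A r (c : Fin N)

noncomputable def gram {n N : ℕ} (A : Matrix (Fin n) (Fin N) ℝ) (I : Finset (Fin N)) :
    Matrix I I ℝ :=
  (subCols A I)ᵀ * subCols A I

noncomputable def pinvApply {n N : ℕ} (A : Matrix (Fin n) (Fin N) ℝ) (I : Finset (Fin N))
    (y : Fin n → ℝ) : I → ℝ :=
  ((gram A I)⁻¹ * (subCols A I)ᵀ).mulVec y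

noncomputable def pinvVec {n N : ℕ} (A : Matrix (Fin n) (Fin N) ℝ) (I : Finset (Fin N))
    (y : Fin n → ℝ) : Fin N → ℝ :=
  fun i => if h : i ∈ I then pinvApply A I y ⟨i, h⟩ else 0

open RealInnerProductSpace

section NearIsometry

variable {E F : Type*} [NormedAddCommGroup E] [InnerProductSpace ℝ E]
  [NormedAddCommGroup F] [InnerProductSpace ℝ F]
  (T : E →ₗ[ℝ] F) (S : Submodule ℝ E)

def AlmostIsometricOn (L U : ℝ) : Prop :=
  ∀ z ∈ S, (1 - L) * ‖z‖ ^ 2 ≤ ‖T z‖ ^ 2 ∧ ‖T z‖ ^ 2 ≤ (1 + U) * ‖z‖ ^ 2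

/-- For orthonormal `x, y` we have `‖x ± y‖² = 2`, and polarization gives
`4 ⟪T x, T y⟫ = ‖T (x + y)‖² - ‖T (x - y)‖² ∈ [-2 (L + U), 2 (L + U)]`. -/
theorem abs_inner_map_map_le_of_orthonormal
    {L U : ℝ} (hT : AlmostIsometricOn T S L U) {x y : E} (hx : x ∈ S) (hy : y ∈ S)
    (hx1 : ‖x‖ = 1) (hy1 : ‖y‖ = 1) (hxy : ⟪x, y⟫ = 0) :
    |⟪T x, T y⟫| ≤ (L + U) / 2 := by
  obtain ⟨hadd_lo, hadd_hi⟩ := hT _ (S.add_mem hx hy)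
  obtain ⟨hsub_lo, hsub_hi⟩ := hT _ (S.sub_mem hx hy)
  rw [map_add, norm_add_sq_real, norm_add_sq_real, hx1, hy1, hxy] at hadd_lo hadd_hi
  rw [map_sub, norm_sub_sq_real, norm_sub_sq_real, hx1, hy1, hxy] at hsub_lo hsub_hi
  exact abs_le.mpr ⟨by linarith, by linarith⟩

theorem abs_inner_map_map_le_of_inner_eq_zero
    {L U : ℝ} (hT : AlmostIsometricOn T S L U) {x y : E} (hx : x ∈ S) (hy : y ∈ S)
    (hxy : ⟪x, y⟫ = 0) :
    |⟪T x, T y⟫| ≤ (L + U) / 2 * ‖x‖ * ‖y‖ := by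
  rcases eq_or_ne x 0 with rfl | hx0
  · simp
  rcases eq_or_ne y 0 with rfl | hy0
  · simp
  have hxn : 0 < ‖x‖ := norm_pos_iff.mpr hx0
  have hyn : 0 < ‖y‖ := norm_pos_iff.mpr hy0
  have hunit := abs_inner_map_map_le_of_orthonormal T S hT
    (S.smul_mem ‖x‖⁻¹ hx) (S.smul_mem ‖y‖⁻¹ hy)
    (norm_smul_inv_norm hx0) (norm_smul_inv_norm hy0)
    (by rw [real_inner_smul_left, real_inner_smul_right, hxy, mul_zero, mul_zero])
  rw [map_smul, map_smul, real_inner_smul_left, real_inner_smul_right, abs_mul, abs_mul,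
    abs_inv, abs_inv, abs_norm, abs_norm, ← mul_assoc, ← mul_inv,
    inv_mul_le_iff₀ (mul_pos hxn hyn)] at hunit
  linarith

end NearIsometry

section Euclidean

variable {ι : Type*}

def supportedOn (s : Set ι) : Submodule ℝ (EuclideanSpace ℝ ι) :=
  (Submodule.pi sᶜ fun _ => ⊥).comap (WithLp.linearEquiv 2 ℝ (ι → ℝ)).toLinearMap

theorem mem_supportedOn {s : Set ι} {x : EuclideanSpace ℝ ι} :
    x ∈ supportedOn s ↔ ∀ i ∉ s, x i = 0 := by
  simp [supportedOn, Submodule.mem_pi]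

variable [Fintype ι]

theorem enorm2_eq_norm (w : ι → ℝ) :
    enorm2 w = ‖(WithLp.toLp 2 w : EuclideanSpace ℝ ι)‖ := by
  simp [enorm2, EuclideanSpace.norm_eq]

theorem sum_mul_eq_inner (p q : ι → ℝ) :
    ∑ i, p i * q i = ⟪(WithLp.toLp 2 p : EuclideanSpace ℝ ι), WithLp.toLp 2 q⟫ := by
  simp [PiLp.inner_apply, mul_comm]

end Euclidean

theorem stmt3_general {n N : ℕ} (A : Matrix (Fin n) (Fin N) ℝ) (I J : Finset (Fin N))
    (hIJ : Disjoint I J) (L U : ℝ)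
    (hA : ∀ x : Fin N → ℝ, (∀ i ∉ I ∪ J, x i = 0) →
      (1 - L) * enorm2 x ^ 2 ≤ enorm2 (A.mulVec x) ^ 2 ∧
        enorm2 (A.mulVec x) ^ 2 ≤ (1 + U) * enorm2 x ^ 2) :
    ∀ u v : Fin N → ℝ, (∀ i ∉ I, u i = 0) → (∀ j ∉ J, v j = 0) →
      |∑ i, A.mulVec u i * A.mulVec v i| ≤ (1 / 2) * (L + U) * enorm2 u * enorm2 v := by
  intro u v hu hv
  have hT : AlmostIsometricOn (Matrix.toLpLin 2 2 A) (supportedOn (I ∪ J : Set (Fin N))) L U := by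
    intro z hz
    have := hA z.ofLp fun i hi => mem_supportedOn.mp hz i (by simpa using hi)
    simpa [enorm2_eq_norm, Matrix.toLpLin_apply] using this
  have huv : ⟪(WithLp.toLp 2 u : EuclideanSpace ℝ (Fin N)), WithLp.toLp 2 v⟫ = 0 := by
    rw [← sum_mul_eq_inner]
    refine Finset.sum_eq_zero fun i _ => ?_
    by_cases hi : i ∈ I
    · simp [hv i (Finset.disjoint_left.mp hIJ hi)]
    · simp [hu i hi]
  have key := abs_inner_map_map_le_of_inner_eq_zero _ _ hT
    (mem_supportedOn.mpr fun i hi => hu i fun h => hi (Or.inl h))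
    (mem_supportedOn.mpr fun i hi => hv i fun h => hi (Or.inr h)) huv
  rw [sum_mul_eq_inner, enorm2_eq_norm, enorm2_eq_norm]
  simpa [Matrix.toLpLin_toLp, div_eq_inv_mul] using key

theorem stmt3 {n N : ℕ} (A : Matrix (Fin n) (Fin N) ℝ) (I J : Finset (Fin N))
    (hIJ : Disjoint I J) (L U : ℝ) (hL : 0 ≤ L) (hU : 0 ≤ U)
    (hA : ∀ x : Fin N → ℝ, (∀ i ∉ I ∪ J, x i = 0) →
      (1 - L) * enorm2 x ^ 2 ≤ enorm2 (A.mulVec x) ^ 2 ∧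
        enorm2 (A.mulVec x) ^ 2 ≤ (1 + U) * enorm2 x ^ 2) :
    ∀ u v : Fin N → ℝ, (∀ i ∉ I, u i = 0) → (∀ j ∉ J, v j = 0) →
      |∑ i, A.mulVec u i * A.mulVec v i| ≤ (1 / 2) * (L + U) * enorm2 u * enorm2 v :=
  stmt3_general A I J hIJ L U hA
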